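/- For x ∈ Σ in the 2-cylinder [ab] (a,b ∈ {0,1}), the sequence (σ∘H)^{2k}(x) converges to a·ρ_b and (σ∘H)^{2k+1}(x) converges to ā·ρ_b as k → ∞, where ā = 1−a; in particular the set of accumulation points of ((σ∘H)ᵏ(x))_k is {0ρ_b, 1ρ_b}. -/

import Mathlib

open Filter Topology MeasureTheory

/-- The left shift on the full 2-shift `Σ = {0,1}^ℕ`. -/
def shift (x : ℕ → Bool) : ℕ → Bool := fun n => x (n + 1)

/-- The Thue–Morse substitution `H : 0 → 01, 1 → 10`, acting on sequences. -/
def subH (x : ℕ → Bool) : ℕ → Bool :=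
  fun n => if n % 2 = 0 then x (n / 2) else !x (n / 2)

/-- The Thue–Morse sequence: `tm n` is the parity of the number of 1s in
the binary expansion of `n`. -/
def tm (n : ℕ) : Bool := (Nat.digits 2 n).count 1 % 2 == 1

/-- The fixed point of `subH` starting with 0. -/
def rho0 : ℕ → Bool := tm

/-- The fixed point of `subH` starting with 1. -/
def rho1 : ℕ → Bool := fun n => !tm n

/-- `rhoB b` is the fixed point of `subH` starting with digit `b`. -/
def rhoB : Bool → ℕ → Bool
  | false => rho0
  | true => rho1

/-- The digit-flipping involution. -/
def flipSeq (x : ℕ → Bool) : ℕ → Bool := fun n => !x n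

/-- Prepend a digit to a sequence. -/
def consTM (a : Bool) (x : ℕ → Bool) : ℕ → Bool
  | 0 => a
  | n + 1 => x n

/-- The Thue–Morse subshift: the closure of the shift orbit of `rho0`. -/
def TMK : Set (ℕ → Bool) := closure {y | ∃ n, y = shift^[n] rho0}

/-- The renormalization operator `𝓡V = V ∘ σ ∘ H + V ∘ H`. -/
def RenOp (V : (ℕ → Bool) → ℝ) : (ℕ → Bool) → ℝ :=
  fun x => V (shift (subH x)) + V (subH x)

/-- The Birkhoff sum `S_k V = ∑_{i<k} V ∘ σⁱ`. -/
def birkhoff (V : (ℕ → Bool) → ℝ) (k : ℕ) (x : ℕ → Bool) : ℝ :=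
  ∑ i ∈ Finset.range k, V (shift^[i] x)

/-- The potential `U_c`: value `c` on `[01]`, `-c` on `[10]`, `0` on `[00] ∪ [11]`. -/
def Upot (c : ℝ) (x : ℕ → Bool) : ℝ :=
  if x 0 = false ∧ x 1 = true then c
  else if x 0 = true ∧ x 1 = false then -c else 0

/-- The sliding block code `π(x)_k = 1` iff `x_k ≠ x_{k+1}`. -/
def piTM (x : ℕ → Bool) : ℕ → Bool := fun n => x n != x (n + 1)

/-- The Feigenbaum substitution `0 → 11, 1 → 10`, acting on sequences. -/
def subHfeig (x : ℕ → Bool) : ℕ → Bool :=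
  fun n => if n % 2 = 0 then true else !x (n / 2)

/-!
`σ ∘ H` sends `a·y` to `ā·H(y)`, so `a·ρ_b` lies on a 2-cycle `a·ρ_b ↦ ā·ρ_b ↦ a·ρ_b`.
If `x` and `y` agree on their first `n + 1` digits, then `σ(H x)` and `σ(H y)` agree on their
first `2n + 1`. A point `x ∈ [ab]` agrees with `a·ρ_b` on two digits, so after `k` steps the two
orbits agree on `2^k + 1` digits: the even and odd iterates of `x` converge to the two points
of the cycle, and these are the only accumulation points of the orbit.
-/

open PiNat

lemma Nat.sup_map_two_mul_map_two_mul_add_one :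
    map (2 * ·) atTop ⊔ map (2 * · + 1) atTop = (atTop : Filter ℕ) := by
  refine le_antisymm (sup_le ?_ ?_) fun s hs => ?_
  · exact tendsto_atTop_mono (fun n => show n ≤ 2 * n by omega) tendsto_id
  · exact tendsto_atTop_mono (fun n => show n ≤ 2 * n + 1 by omega) tendsto_id
  obtain ⟨heven, hodd⟩ := mem_sup.1 hs
  obtain ⟨N, hN⟩ := mem_atTop_sets.1 (mem_map.1 heven)
  obtain ⟨M, hM⟩ := mem_atTop_sets.1 (mem_map.1 hodd)
  refine mem_atTop_sets.2 ⟨2 * (N + M), fun n hn => ?_⟩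
  obtain ⟨k, rfl | rfl⟩ := Nat.even_or_odd' n
  · exact hN k (by omega)
  · exact hM k (by omega)

lemma Filter.Tendsto.mapClusterPt_iff_eq {α X : Type*} [TopologicalSpace X] [T2Space X]
    {F : Filter α} [F.NeBot] {u : α → X} {p q : X} (h : Tendsto u F (𝓝 q)) :
    MapClusterPt p F u ↔ p = q :=
  ⟨fun hp => eq_of_nhds_neBot (hp.clusterPt.mono h), by rintro rfl; exact h.mapClusterPt⟩

lemma Nat.mapClusterPt_atTop_iff_of_tendsto_even_odd {X : Type*} [TopologicalSpace X]
    [T2Space X] {u : ℕ → X} {p q : X} (heven : Tendsto (fun k => u (2 * k)) atTop (𝓝 p))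
    (hodd : Tendsto (fun k => u (2 * k + 1)) atTop (𝓝 q)) (r : X) :
    MapClusterPt r atTop u ↔ r = p ∨ r = q := by
  rw [mapClusterPt_def, ← Nat.sup_map_two_mul_map_two_mul_add_one, map_sup, map_map, map_map,
    clusterPt_sup]
  exact or_congr heven.mapClusterPt_iff_eq hodd.mapClusterPt_iff_eq

lemma tendsto_of_eventually_mem_cylinder {α E : Type*} [TopologicalSpace E] [DiscreteTopology E]
    {l : Filter α} {f : α → ℕ → E} {y : ℕ → E} (h : ∀ n, ∀ᶠ a in l, f a ∈ cylinder y n) : Tendsto f l (𝓝 y) := by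
  rw [tendsto_pi_nhds]
  intro i
  rw [nhds_discrete, tendsto_pure]
  filter_upwards [h (i + 1)] with a ha using mem_cylinder_iff.1 ha i (lt_add_one i)

lemma tm_two_mul (m : ℕ) : tm (2 * m) = tm m := by
  rcases Nat.eq_zero_or_pos m with rfl | hm
  · rfl
  · rw [tm, Nat.digits_def' (b := 2) (by norm_num) (by omega)]
    simp [tm]

lemma tm_two_mul_add_one (m : ℕ) : tm (2 * m + 1) = !tm m := by
  have hdiv : (2 * m + 1) / 2 = m := by omega
  rw [tm, tm, Nat.digits_def' (b := 2) (by norm_num) (by omega), hdiv]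
  rcases Nat.mod_two_eq_zero_or_one ((Nat.digits 2 m).count 1) with h | h <;>
    simp [Nat.add_mod, h]

lemma subH_rhoB (b : Bool) : subH (rhoB b) = rhoB b := by
  funext n
  obtain ⟨m, rfl | rfl⟩ := Nat.even_or_odd' n
  · cases b <;> simp [subH, rhoB, rho0, rho1, tm_two_mul]
  · have hdiv : (2 * m + 1) / 2 = m := by omega
    cases b <;> simp [subH, rhoB, rho0, rho1, tm_two_mul_add_one, hdiv]

lemma shift_subH_consTM (a : Bool) (y : ℕ → Bool) :
    shift (subH (consTM a y)) = consTM (!a) (subH y) := by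
  funext n
  cases n with
  | zero => rfl
  | succ n =>
    have hmod : (n + 2) % 2 = n % 2 := Nat.add_mod_right n 2
    have hdiv : (n + 2) / 2 = n / 2 + 1 := Nat.add_div_right n two_pos
    simp only [shift, subH, consTM, hmod, hdiv]

lemma shift_subH_mem_cylinder {x y : ℕ → Bool} {n : ℕ} (h : y ∈ cylinder x (n + 1)) :
    shift (subH y) ∈ cylinder (shift (subH x)) (2 * n + 1) := by
  rw [mem_cylinder_iff] at h ⊢
  intro i hi
  simp only [shift, subH, h ((i + 1) / 2) (by omega)]

lemma iterate_shift_subH_mem_cylinder {x y : ℕ → Bool} (h : y ∈ cylinder x 2) (k : ℕ) :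
    (shift ∘ subH)^[k] y ∈ cylinder ((shift ∘ subH)^[k] x) (2 ^ k + 1) := by
  induction k with
  | zero => exact h
  | succ k ih =>
    rw [Function.iterate_succ_apply', Function.iterate_succ_apply', pow_succ, mul_comm]
    exact shift_subH_mem_cylinder ih

lemma iterate_two_mul_shift_subH_consTM_rhoB (a b : Bool) (k : ℕ) :
    (shift ∘ subH)^[2 * k] (consTM a (rhoB b)) = consTM a (rhoB b) := by
  have hperiod : (shift ∘ subH)^[2] (consTM a (rhoB b)) = consTM a (rhoB b) := by
    simp [shift_subH_consTM, subH_rhoB]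
  rw [Function.iterate_mul]
  exact Function.iterate_fixed hperiod k

lemma tendsto_iterate_shift_subH_two_mul_add {x : ℕ → Bool} {a b : Bool}
    (hx : x ∈ cylinder (consTM a (rhoB b)) 2) (j : ℕ) :
    Tendsto (fun k => (shift ∘ subH)^[2 * k + j] x) atTop
      (𝓝 ((shift ∘ subH)^[j] (consTM a (rhoB b)))) := by
  refine tendsto_of_eventually_mem_cylinder fun n => ?_
  filter_upwards [eventually_ge_atTop n] with k hk
  have hn : n ≤ 2 ^ (2 * k + j) + 1 := by
    have := Nat.lt_two_pow_self (n := 2 * k + j)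
    omega
  have hperiodic : (shift ∘ subH)^[2 * k + j] (consTM a (rhoB b)) =
      (shift ∘ subH)^[j] (consTM a (rhoB b)) := by
    rw [add_comm, Function.iterate_add_apply, iterate_two_mul_shift_subH_consTM_rhoB]
  exact cylinder_anti _ hn (hperiodic ▸ iterate_shift_subH_mem_cylinder hx (2 * k + j))

lemma mem_cylinder_consTM_rhoB_two {x : ℕ → Bool} {a b : Bool} (ha : x 0 = a) (hb : x 1 = b) :
    x ∈ cylinder (consTM a (rhoB b)) 2 := by
  rw [mem_cylinder_iff]
  intro i hi
  interval_cases i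
  · exact ha
  · cases b <;> exact hb

/-- for `x ∈ [ab]`, the even iterates `(σ∘H)^{2k}(x)` converge to `a·ρ_b`,
the odd iterates to `ā·ρ_b`, and the set of accumulation points of `((σ∘H)ᵏx)_k`
is `{0·ρ_b, 1·ρ_b}`. -/
theorem stmt7 (x : ℕ → Bool) (a b : Bool) (ha : x 0 = a) (hb : x 1 = b) :
    Tendsto (fun k => (shift ∘ subH)^[2 * k] x) atTop (nhds (consTM a (rhoB b))) ∧
    Tendsto (fun k => (shift ∘ subH)^[2 * k + 1] x) atTop (nhds (consTM (!a) (rhoB b))) ∧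
    {p | MapClusterPt p atTop (fun k => (shift ∘ subH)^[k] x)} =
      {consTM false (rhoB b), consTM true (rhoB b)} := by
  have hx := mem_cylinder_consTM_rhoB_two ha hb
  have heven := tendsto_iterate_shift_subH_two_mul_add hx 0
  have hodd := tendsto_iterate_shift_subH_two_mul_add hx 1
  simp only [add_zero, Function.iterate_zero_apply, Function.iterate_one, Function.comp_apply,
    shift_subH_consTM, subH_rhoB] at heven hodd
  refine ⟨heven, hodd, ?_⟩
  ext p
  rw [Set.mem_ofPred_eq, Nat.mapClusterPt_atTop_iff_of_tendsto_even_odd heven hodd]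
  cases a <;> simp [or_comm]
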